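/- For each j ∈ {1, …, n}, the per-interval error satisfies Δ_X(I_j) = p_j · sup_{s ∈ I_j} ( min(s, μ_j) − E[min(s, X) | X ∈ I_j] ). -/

import Mathlib

open MeasureTheory

/-- The `j`-th region of the partition of `ℝ` induced by points `q 0 < q 1 < ⋯ < q n`:
`I_0 = (−∞, q 0]`, `I_j = (q (j−1), q j]` for `1 ≤ j ≤ n`, and `I_{n+1} = (q n, ∞)`. -/
noncomputable def seg (q : ℕ → ℝ) (n j : ℕ) : Set ℝ :=
  if j = 0 then Set.Iic (q 0)
  else if j ≤ n then Set.Ioc (q (j - 1)) (q j)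
  else Set.Ioi (q n)

/-- `p_j = P(X ∈ I_j)`. -/
noncomputable def segProb {Ω : Type*} [MeasurableSpace Ω]
    (P : Measure Ω) (X : Ω → ℝ) (q : ℕ → ℝ) (n j : ℕ) : ℝ :=
  (P {ω | X ω ∈ seg q n j}).toReal

/-- `μ_j = E[X | X ∈ I_j] = E[1_{X ∈ I_j} X] / p_j`. -/
noncomputable def segMean {Ω : Type*} [MeasurableSpace Ω]
    (P : Measure Ω) (X : Ω → ℝ) (q : ℕ → ℝ) (n j : ℕ) : ℝ :=
  (∫ ω in {ω | X ω ∈ seg q n j}, X ω ∂P) / segProb P X q n j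

/-- The induced piecewise linear approximation `f̃(s) = ∑_{j=0}^{n+1} p_j · min(s, μ_j)`. -/
noncomputable def ftilde {Ω : Type*} [MeasurableSpace Ω]
    (P : Measure Ω) (X : Ω → ℝ) (q : ℕ → ℝ) (n : ℕ) (s : ℝ) : ℝ :=
  ∑ j ∈ Finset.range (n + 2), segProb P X q n j * min s (segMean P X q n j)

/-!
Fix `s ∈ I_j` and split `E[min(s, X)]` over the events `{X ∈ I_k}`. For `k < j` all values of
`X` on `{X ∈ I_k}` lie below `s`, and for `k > j` above it; on such an event `min(s, ·)` is affine,
so its contribution is exactly `p_k · min(s, μ_k)` and cancels the matching term of `f̃(s)`.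
What is left, `p_j · min(s, μ_j) - E[min(s, X); X ∈ I_j]`, is nonnegative by Jensen's inequality
for the concave function `min(s, ·)`, so the absolute value drops and `p_j` factors out of the
supremum.
-/

open Set

section SetIntegral

variable {Ω : Type*} [MeasurableSpace Ω] {P : Measure Ω} [IsFiniteMeasure P] {A : Set Ω}
  {X : Ω → ℝ} {s : ℝ}

-- No positivity of `P A` is needed: if `P.real A = 0` then `x / 0 = 0` and the integral vanishes.
lemma measureReal_mul_setIntegral_div (f : Ω → ℝ) :
    P.real A * ((∫ ω in A, f ω ∂P) / P.real A) = ∫ ω in A, f ω ∂P :=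
  mul_div_cancel_of_imp' fun h =>
    setIntegral_measure_zero f ((measureReal_eq_zero_iff (measure_ne_top P A)).1 h)

lemma measureReal_mul_min_setIntegral_div :
    P.real A * min s ((∫ ω in A, X ω ∂P) / P.real A) = min (s * P.real A) (∫ ω in A, X ω ∂P) := by
  rw [mul_min_of_nonneg _ _ measureReal_nonneg, measureReal_mul_setIntegral_div, mul_comm]

lemma setIntegral_min_le_measureReal_mul_min (hA : NullMeasurableSet A P)
    (hXA : IntegrableOn X A P) :
    ∫ ω in A, min s (X ω) ∂P ≤ P.real A * min s ((∫ ω in A, X ω ∂P) / P.real A) := by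
  have hmin : IntegrableOn (fun ω => min s (X ω)) A P := (integrable_const s).inf hXA
  rw [measureReal_mul_min_setIntegral_div, mul_comm s, ← smul_eq_mul, ← setIntegral_const]
  exact le_min (setIntegral_mono_on₀ hmin (integrable_const s) hA fun ω _ => min_le_left _ _)
    (setIntegral_mono_on₀ hmin hXA hA fun ω _ => min_le_right _ _)

lemma setIntegral_min_eq_of_forall_le (hA : NullMeasurableSet A P) (hXA : IntegrableOn X A P)
    (h : ∀ ω ∈ A, X ω ≤ s) :
    ∫ ω in A, min s (X ω) ∂P = P.real A * min s ((∫ ω in A, X ω ∂P) / P.real A) := by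
  have hX_le : ∫ ω in A, X ω ∂P ≤ s * P.real A := by
    rw [mul_comm, ← smul_eq_mul, ← setIntegral_const]
    exact setIntegral_mono_on₀ hXA (integrable_const s) hA h
  rw [measureReal_mul_min_setIntegral_div, min_eq_right hX_le]
  exact setIntegral_congr_fun₀ hA fun ω hω => min_eq_right (h ω hω)

lemma setIntegral_min_eq_of_forall_ge (hA : NullMeasurableSet A P) (hXA : IntegrableOn X A P)
    (h : ∀ ω ∈ A, s ≤ X ω) :
    ∫ ω in A, min s (X ω) ∂P = P.real A * min s ((∫ ω in A, X ω ∂P) / P.real A) := by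
  have hX_ge : s * P.real A ≤ ∫ ω in A, X ω ∂P := by
    rw [mul_comm, ← smul_eq_mul, ← setIntegral_const]
    exact setIntegral_mono_on₀ (integrable_const s) hXA hA h
  rw [measureReal_mul_min_setIntegral_div, min_eq_left hX_ge, mul_comm, ← smul_eq_mul,
    ← setIntegral_const]
  exact setIntegral_congr_fun₀ hA fun ω hω => min_eq_left (h ω hω)

end SetIntegral

lemma integral_eq_sum_setIntegral_of_iUnion_eq_univ {Ω ι E : Type*} [MeasurableSpace Ω]
    [NormedAddCommGroup E] [NormedSpace ℝ E] {P : Measure Ω} {f : Ω → E} (hf : Integrable f P)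
    (t : Finset ι) {A : ι → Set Ω}
    (hA : ∀ i ∈ t, NullMeasurableSet (A i) P) (hdisj : (t : Set ι).PairwiseDisjoint A)
    (hcover : ⋃ i ∈ t, A i = univ) :
    ∫ ω, f ω ∂P = ∑ i ∈ t, ∫ ω in A i, f ω ∂P :=
  calc ∫ ω, f ω ∂P = ∫ ω, (⋃ i ∈ t, A i).indicator f ω ∂P := by rw [hcover, indicator_univ]
    _ = ∫ ω, ∑ i ∈ t, (A i).indicator f ω ∂P := by
      simp only [Finset.indicator_biUnion_apply t A hdisj]
    _ = ∑ i ∈ t, ∫ ω in A i, f ω ∂P := by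
      rw [integral_finsetSum t fun i hi => hf.indicator₀ (hA i hi)]
      exact Finset.sum_congr rfl fun i hi => integral_indicator₀ (hA i hi)

lemma Real.sSup_image_mul_of_nonneg {α : Type*} {r : ℝ} (hr : 0 ≤ r) (f : α → ℝ) (S : Set α) :
    sSup ((fun x => r * f x) '' S) = r * sSup (f '' S) := by
  rw [← smul_eq_mul, ← Real.sSup_smul_of_nonneg hr, ← Set.image_smul, image_image]
  rfl

lemma measurableSet_seg (q : ℕ → ℝ) (n j : ℕ) : MeasurableSet (seg q n j) := by
  unfold seg
  split_ifs
  exacts [measurableSet_Iic, measurableSet_Ioc, measurableSet_Ioi]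

section Seg

variable {q : ℕ → ℝ} {n : ℕ}

lemma seg_subset_Iic {k : ℕ} (hk : k ≤ n) : seg q n k ⊆ Iic (q k) := by
  unfold seg
  split_ifs with h0
  · rw [h0]
  · exact Ioc_subset_Iic_self

lemma seg_subset_Ioi {k : ℕ} (hk₁ : 1 ≤ k) (hk : k ≤ n + 1) : seg q n k ⊆ Ioi (q (k - 1)) := by
  unfold seg
  split_ifs with h0 hkn
  · omega
  · exact Ioc_subset_Ioi_self
  · rw [show k - 1 = n by omega]

lemma iUnion_seg (q : ℕ → ℝ) (n : ℕ) : ⋃ k ∈ Finset.range (n + 2), seg q n k = univ := by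
  refine eq_univ_of_forall fun x => ?_
  simp only [mem_iUnion, Finset.mem_range, exists_prop]
  by_cases h0 : x ≤ q 0
  · exact ⟨0, by omega, by simpa [seg] using h0⟩
  by_cases hn : q n < x
  · exact ⟨n + 1, by omega, by simpa [seg] using hn⟩
  push Not at h0 hn
  have hex : ∃ k, x ≤ q k := ⟨n, hn⟩
  have hk0 : 0 < Nat.find hex := (Nat.find_pos hex).mpr h0.not_ge
  have hkn : Nat.find hex ≤ n := Nat.find_min' hex hn
  have hlt : q (Nat.find hex - 1) < x := not_le.mp (Nat.find_min hex (by omega))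
  exact ⟨Nat.find hex, by omega, by
    simpa [seg, hk0.ne', hkn] using ⟨hlt, Nat.find_spec hex⟩⟩

lemma pairwiseDisjoint_seg (hq : MonotoneOn q (Iic n)) :
    (Finset.range (n + 2) : Set ℕ).PairwiseDisjoint (seg q n) := by
  have key : ∀ k l, k < l → l ≤ n + 1 → Disjoint (seg q n k) (seg q n l) := by
    intro k l hkl hl
    refine Set.disjoint_left.mpr fun x hxk hxl => ?_
    have h₁ : x ≤ q k := seg_subset_Iic (by omega) hxk
    have h₂ : q (l - 1) < x := seg_subset_Ioi (by omega) hl hxl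
    have h₃ : q k ≤ q (l - 1) := hq (mem_Iic.mpr (by omega)) (mem_Iic.mpr (by omega)) (by omega)
    linarith
  intro k hk l hl hkl
  simp only [Finset.coe_range, mem_Iio] at hk hl
  rcases lt_or_gt_of_ne hkl with h | h
  exacts [key k l h (by omega), (key l k h (by omega)).symm]

end Seg

section PiecewiseLinearApproximation

variable {Ω : Type*} [MeasurableSpace Ω] {P : Measure Ω} {X : Ω → ℝ} {q : ℕ → ℝ} {n : ℕ}

lemma segProb_eq_measureReal (j : ℕ) : segProb P X q n j = P.real {ω | X ω ∈ seg q n j} := rfl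

lemma nullMeasurableSet_mem_seg (hX : AEMeasurable X P) (j : ℕ) :
    NullMeasurableSet {ω | X ω ∈ seg q n j} P :=
  hX.nullMeasurableSet_preimage (measurableSet_seg q n j)

variable [IsFiniteMeasure P]

lemma integral_min_eq_sum_setIntegral_seg (hX : Integrable X P) (hq : MonotoneOn q (Iic n))
    (s : ℝ) :
    ∫ ω, min s (X ω) ∂P
      = ∑ k ∈ Finset.range (n + 2), ∫ ω in {ω | X ω ∈ seg q n k}, min s (X ω) ∂P :=
  integral_eq_sum_setIntegral_of_iUnion_eq_univ ((integrable_const s).inf hX) _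
    (fun k _ => nullMeasurableSet_mem_seg hX.aemeasurable k)
    (fun k hk l hl hkl => (pairwiseDisjoint_seg hq hk hl hkl).preimage X)
    (by rw [← preimage_univ (f := X), ← iUnion_seg q n, preimage_iUnion₂]; rfl)

lemma segProb_mul_min_segMean_of_ne (hX : Integrable X P) (hq : MonotoneOn q (Iic n))
    {j k : ℕ} (hj₁ : 1 ≤ j) (hjn : j ≤ n) (hk : k ≤ n + 1) (hkj : k ≠ j) {s : ℝ}
    (hs : s ∈ Ioc (q (j - 1)) (q j)) :
    segProb P X q n k * min s (segMean P X q n k)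
      = ∫ ω in {ω | X ω ∈ seg q n k}, min s (X ω) ∂P := by
  have hA := nullMeasurableSet_mem_seg (q := q) (n := n) hX.aemeasurable k
  rcases lt_or_gt_of_ne hkj with hlt | hgt
  · refine (setIntegral_min_eq_of_forall_le hA hX.integrableOn fun ω hω => ?_).symm
    calc X ω ≤ q k := seg_subset_Iic (by omega) hω
      _ ≤ q (j - 1) := hq (mem_Iic.mpr (by omega)) (mem_Iic.mpr (by omega)) (by omega)
      _ ≤ s := hs.1.le
  · refine (setIntegral_min_eq_of_forall_ge hA hX.integrableOn fun ω hω => ?_).symm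
    calc s ≤ q j := hs.2
      _ ≤ q (k - 1) := hq (mem_Iic.mpr hjn) (mem_Iic.mpr (by omega)) (by omega)
      _ ≤ X ω := (seg_subset_Ioi (by omega) hk hω).le

lemma ftilde_sub_integral_min (hX : Integrable X P) (hq : MonotoneOn q (Iic n))
    {j : ℕ} (hj₁ : 1 ≤ j) (hjn : j ≤ n) {s : ℝ} (hs : s ∈ Ioc (q (j - 1)) (q j)) :
    ftilde P X q n s - ∫ ω, min s (X ω) ∂P
      = segProb P X q n j * min s (segMean P X q n j)
        - ∫ ω in {ω | X ω ∈ seg q n j}, min s (X ω) ∂P := by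
  rw [integral_min_eq_sum_setIntegral_seg hX hq, ftilde, ← Finset.sum_sub_distrib,
    Finset.sum_eq_single_of_mem j (Finset.mem_range.mpr (by omega))]
  intro k hk hkj
  rw [segProb_mul_min_segMean_of_ne hX hq hj₁ hjn (Nat.lt_succ_iff.mp (Finset.mem_range.mp hk))
    hkj hs, sub_self]

end PiecewiseLinearApproximation

theorem perInterval_error_formula_general {Ω : Type*} [MeasurableSpace Ω]
    (P : Measure Ω) [IsProbabilityMeasure P]
    (X : Ω → ℝ) (hX : Integrable X P)
    (n : ℕ) (q : ℕ → ℝ)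
    (hmono : ∀ i < n, q i < q (i + 1)) :
    ∀ j, 1 ≤ j → j ≤ n →
      sSup ((fun s => |ftilde P X q n s - ∫ ω, min s (X ω) ∂P|)
              '' Set.Ioc (q (j - 1)) (q j))
        = segProb P X q n j *
            sSup ((fun s => min s (segMean P X q n j)
                    - (∫ ω in {ω | X ω ∈ seg q n j}, min s (X ω) ∂P) / segProb P X q n j)
                '' Set.Ioc (q (j - 1)) (q j)) := by
  intro j hj₁ hjn
  have hq : MonotoneOn q (Iic n) := (strictMonoOn_Iic_of_lt_succ hmono).monotoneOn
  have hA := nullMeasurableSet_mem_seg (q := q) (n := n) hX.aemeasurable j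
  rw [← Real.sSup_image_mul_of_nonneg (r := segProb P X q n j) ENNReal.toReal_nonneg]
  refine congrArg sSup (image_congr fun s hs => ?_)
  rw [ftilde_sub_integral_min hX hq hj₁ hjn hs, segMean, segProb_eq_measureReal,
    abs_of_nonneg (sub_nonneg.mpr (setIntegral_min_le_measureReal_mul_min hA hX.integrableOn)),
    mul_sub, measureReal_mul_setIntegral_div]

/-- For each `j ∈ {1,…,n}`, the per-interval error satisfies
`Δ_X(I_j) = sup_{s ∈ I_j} |f̃(s) − f_X(s)|
  = p_j · sup_{s ∈ I_j} (min(s, μ_j) − E[min(s,X) | X ∈ I_j])`. -/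
theorem perInterval_error_formula {Ω : Type*} [MeasurableSpace Ω]
    (P : Measure Ω) [IsProbabilityMeasure P]
    (X : Ω → ℝ) (hX : Integrable X P)
    (a b : ℝ) (hab : a < b) (n : ℕ) (hn : 1 ≤ n)
    (q : ℕ → ℝ) (hq0 : q 0 = a) (hqn : q n = b)
    (hmono : ∀ i < n, q i < q (i + 1))
    (hpos : ∀ j ≤ n + 1, 0 < segProb P X q n j) :
    ∀ j, 1 ≤ j → j ≤ n →
      sSup ((fun s => |ftilde P X q n s - ∫ ω, min s (X ω) ∂P|)
              '' Set.Ioc (q (j - 1)) (q j))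
        = segProb P X q n j *
            sSup ((fun s => min s (segMean P X q n j)
                    - (∫ ω in {ω | X ω ∈ seg q n j}, min s (X ω) ∂P) / segProb P X q n j)
                '' Set.Ioc (q (j - 1)) (q j)) :=
  perInterval_error_formula_general P X hX n q hmono
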